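/- arXiv:2103.15790 — 2 statements merged into one kernel-verified Lean document; each statement's English description precedes it below -/
import Mathlib

section
/- Let I be a nonempty index set, {ρ_i}_{i∈I} a collection of star-shaped risk measures, and for each i ∈ I let Γ_i be a set of convex risk measures with ρ_i(X) = min_{γ∈Γ_i} γ(X) for all X ∈ 𝒳 (minima attained). Then for every X ∈ 𝒳, sup_{i∈I} ρ_i(X) = min{γ(X) : γ ∈ ∩_{i∈I} Γ̃_i}, the minimum being attained; moreover ∩_{i∈I} Γ̃_i equals the set of all convex risk measures dominating sup_{i∈I} ρ_i pointwise. -/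
open BoundedContinuousFunction

def IsRiskMeasure {Ω : Type*} [TopologicalSpace Ω] (ρ : (Ω →ᵇ ℝ) → ℝ) : Prop :=
  (∀ X Y : Ω →ᵇ ℝ, Y ≤ X → ρ Y ≤ ρ X) ∧
  (∀ (X : Ω →ᵇ ℝ) (m : ℝ), ρ (X - const Ω m) = ρ X - m) ∧
  ρ 0 = 0

def IsStarShaped {Ω : Type*} [TopologicalSpace Ω] (ρ : (Ω →ᵇ ℝ) → ℝ) : Prop :=
  ∀ (X : Ω →ᵇ ℝ) (l : ℝ), 1 < l → l * ρ X ≤ ρ (l • X)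

def IsConvex {Ω : Type*} [TopologicalSpace Ω] (ρ : (Ω →ᵇ ℝ) → ℝ) : Prop :=
  ∀ (X Y : Ω →ᵇ ℝ) (t : ℝ), t ∈ Set.Icc (0 : ℝ) 1 →
    ρ (t • X + (1 - t) • Y) ≤ t * ρ X + (1 - t) * ρ Y

/-- The relaxation `Γ̃` of a set `Γ` of convex risk measures. -/
def relaxation {Ω : Type*} [TopologicalSpace Ω] (Γ : Set ((Ω →ᵇ ℝ) → ℝ)) :
    Set ((Ω →ᵇ ℝ) → ℝ) :=
  {g | (IsRiskMeasure g ∧ IsConvex g) ∧ ∀ X : Ω →ᵇ ℝ, ∃ γ ∈ Γ, γ X ≤ g X}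

/-!
A star-shaped risk measure `ρ` is the pointwise minimum of the convex risk measures above it: given
`X₀`, put `Z = X₀ - ρ X₀`, so that `ρ Z = 0` and, by star-shapedness, `ρ (l • Z) ≤ 0` for
`l ∈ [0, 1]`. The largest risk measure accepting the whole segment `[0, Z]`,
`X ↦ inf_{l ∈ [0, 1]} sup (X - l • Z)`, is convex, dominates `ρ` and equals `ρ` at `X₀`.
A supremum of star-shaped risk measures is again one, and a convex risk measure lies in every
relaxation `Γ̃ᵢ` exactly when it dominates every `ρᵢ`, i.e. when it dominates `sup ρᵢ`.
-/

namespace BoundedContinuousFunction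

variable {Ω : Type*} [TopologicalSpace Ω]

noncomputable def worstCase (X : Ω →ᵇ ℝ) : ℝ := ⨆ ω, X ω

lemma bddAbove_range_apply (X : Ω →ᵇ ℝ) : BddAbove (Set.range X) :=
  ⟨‖X‖, by rintro _ ⟨ω, rfl⟩; exact X.apply_le_norm ω⟩

lemma apply_le_worstCase (X : Ω →ᵇ ℝ) (ω : Ω) : X ω ≤ worstCase X :=
  le_ciSup X.bddAbove_range_apply ω

lemma worstCase_mono : Monotone (worstCase (Ω := Ω)) :=
  fun _ X h => ciSup_mono X.bddAbove_range_apply h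

variable [Nonempty Ω]

lemma worstCase_le {X : Ω →ᵇ ℝ} {m : ℝ} (h : ∀ ω, X ω ≤ m) : worstCase X ≤ m :=
  ciSup_le h

lemma worstCase_const (m : ℝ) : worstCase (const Ω m) = m :=
  ciSup_const

lemma worstCase_zero : worstCase (0 : Ω →ᵇ ℝ) = 0 :=
  worstCase_const 0

lemma worstCase_sub_const (X : Ω →ᵇ ℝ) (m : ℝ) : worstCase (X - const Ω m) = worstCase X - m := by
  simp only [worstCase, ciSup_sub X.bddAbove_range_apply, coe_sub, Pi.sub_apply, const_apply]

lemma isConvex_worstCase : IsConvex (worstCase (Ω := Ω)) := by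
  rintro X Y t ⟨ht₀, ht₁⟩
  refine worstCase_le fun ω => ?_
  simp only [coe_add, coe_smul, Pi.add_apply, smul_eq_mul]
  have := X.apply_le_worstCase ω
  have := Y.apply_le_worstCase ω
  gcongr

end BoundedContinuousFunction

section RiskMeasure

variable {Ω : Type*} [TopologicalSpace Ω] {ρ : (Ω →ᵇ ℝ) → ℝ}

lemma IsRiskMeasure.le_add_worstCase_sub (hρ : IsRiskMeasure ρ) (X Y : Ω →ᵇ ℝ) :
    ρ X ≤ ρ Y + worstCase (X - Y) := by
  have hXY : ∀ ω, X ω ≤ (Y - const Ω (-worstCase (X - Y))) ω := fun ω => by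
    have := (X - Y).apply_le_worstCase ω
    simp only [coe_sub, Pi.sub_apply, const_apply] at this ⊢
    linarith
  calc ρ X ≤ ρ (Y - const Ω (-worstCase (X - Y))) := hρ.1 _ _ hXY
    _ = ρ Y + worstCase (X - Y) := by rw [hρ.2.1, sub_neg_eq_add]

lemma IsRiskMeasure.le_worstCase (hρ : IsRiskMeasure ρ) (X : Ω →ᵇ ℝ) : ρ X ≤ worstCase X := by
  simpa [hρ.2.2] using hρ.le_add_worstCase_sub X 0

lemma IsStarShaped.smul_nonpos (hρ : IsStarShaped ρ) (hρ₀ : ρ 0 = 0) {Z : Ω →ᵇ ℝ} (hZ : ρ Z ≤ 0)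
    {l : ℝ} (hl : l ∈ unitInterval) : ρ (l • Z) ≤ 0 := by
  obtain ⟨hl₀, hl₁⟩ := hl
  rcases hl₀.eq_or_lt with rfl | hl₀
  · rw [zero_smul, hρ₀]
  rcases hl₁.eq_or_lt with rfl | hl₁
  · rwa [one_smul]
  have := hρ (l • Z) l⁻¹ (one_lt_inv₀ hl₀ |>.mpr hl₁)
  rw [smul_smul, inv_mul_cancel₀ hl₀.ne', one_smul] at this
  nlinarith [inv_pos.mpr hl₀]

variable {ι : Type*} {ρ : ι → (Ω →ᵇ ℝ) → ℝ}

lemma bddAbove_range_of_isRiskMeasure (hρ : ∀ i, IsRiskMeasure (ρ i)) (X : Ω →ᵇ ℝ) :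
    BddAbove (Set.range fun i => ρ i X) :=
  ⟨worstCase X, by rintro _ ⟨i, rfl⟩; exact (hρ i).le_worstCase X⟩

lemma IsRiskMeasure.iSup [Nonempty ι] (hρ : ∀ i, IsRiskMeasure (ρ i)) :
    IsRiskMeasure fun X => ⨆ i, ρ i X := by
  refine ⟨fun X Y hYX => ?_, fun X m => ?_, ?_⟩
  · exact ciSup_mono (bddAbove_range_of_isRiskMeasure hρ X) fun i => (hρ i).1 X Y hYX
  · simp only [(hρ _).2.1, ciSup_sub (bddAbove_range_of_isRiskMeasure hρ X)]
  · simp only [(hρ _).2.2, ciSup_const]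

lemma IsStarShaped.iSup (hρ : ∀ i, IsRiskMeasure (ρ i)) (hss : ∀ i, IsStarShaped (ρ i)) :
    IsStarShaped fun X => ⨆ i, ρ i X := by
  intro X l hl
  rw [Real.mul_iSup_of_nonneg (by linarith)]
  exact ciSup_mono (bddAbove_range_of_isRiskMeasure hρ (l • X)) fun i => hss i X l hl

end RiskMeasure

section SegmentRisk

variable {Ω : Type*} [TopologicalSpace Ω]

noncomputable def segmentRisk (Z X : Ω →ᵇ ℝ) : ℝ :=
  ⨅ l : unitInterval, worstCase (X - (l : ℝ) • Z)

lemma le_segmentRisk_of_smul_nonpos {Z : Ω →ᵇ ℝ} {ρ : (Ω →ᵇ ℝ) → ℝ} (hρ : IsRiskMeasure ρ)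
    (hZ : ∀ l : unitInterval, ρ ((l : ℝ) • Z) ≤ 0) (X : Ω →ᵇ ℝ) : ρ X ≤ segmentRisk Z X :=
  le_ciInf fun l => (hρ.le_add_worstCase_sub X _).trans (by linarith [hZ l])

variable [Nonempty Ω]

lemma bddBelow_range_worstCase_sub_smul (Z X : Ω →ᵇ ℝ) :
    BddBelow (Set.range fun l : unitInterval => worstCase (X - (l : ℝ) • Z)) := by
  refine ⟨-(‖X‖ + ‖Z‖), ?_⟩
  rintro _ ⟨⟨l, hl₀, hl₁⟩, rfl⟩
  obtain ⟨ω⟩ := ‹Nonempty Ω›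
  have := (X - l • Z).apply_le_worstCase ω
  simp only [coe_sub, coe_smul, Pi.sub_apply, smul_eq_mul] at this
  nlinarith [X.neg_norm_le_apply ω, Z.apply_le_norm ω, norm_nonneg Z]

variable {Z : Ω →ᵇ ℝ}

lemma segmentRisk_le (X : Ω →ᵇ ℝ) (l : unitInterval) :
    segmentRisk Z X ≤ worstCase (X - (l : ℝ) • Z) :=
  ciInf_le (bddBelow_range_worstCase_sub_smul Z X) l

lemma segmentRisk_mono : Monotone (segmentRisk Z) := fun Y _ hYX =>
  ciInf_mono (bddBelow_range_worstCase_sub_smul Z Y) fun _ => worstCase_mono (sub_le_sub_right hYX _)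

lemma segmentRisk_sub_const (X : Ω →ᵇ ℝ) (m : ℝ) :
    segmentRisk Z (X - const Ω m) = segmentRisk Z X - m := by
  rw [segmentRisk, segmentRisk, ciInf_sub (bddBelow_range_worstCase_sub_smul Z X)]
  congr 1 with l
  rw [sub_right_comm, worstCase_sub_const]

lemma isConvex_segmentRisk : IsConvex (segmentRisk Z) := by
  rintro X Y t ht
  refine le_of_forall_pos_le_add fun ε hε => ?_
  obtain ⟨lX, hlX⟩ := exists_lt_of_ciInf_lt (lt_add_of_pos_right (segmentRisk Z X) hε)
  obtain ⟨lY, hlY⟩ := exists_lt_of_ciInf_lt (lt_add_of_pos_right (segmentRisk Z Y) hε)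
  let l : unitInterval := ⟨t * lX + (1 - t) * lY, convex_Icc (0 : ℝ) 1 lX.2 lY.2 ht.1
    (sub_nonneg.mpr ht.2) (add_sub_cancel t 1)⟩
  have hcomb : t • X + (1 - t) • Y - (l : ℝ) • Z =
      t • (X - (lX : ℝ) • Z) + (1 - t) • (Y - (lY : ℝ) • Z) := by
    simp only [l]; module
  calc segmentRisk Z (t • X + (1 - t) • Y)
      ≤ worstCase (t • (X - (lX : ℝ) • Z) + (1 - t) • (Y - (lY : ℝ) • Z)) :=
        hcomb ▸ segmentRisk_le _ l
    _ ≤ t * worstCase (X - (lX : ℝ) • Z) + (1 - t) * worstCase (Y - (lY : ℝ) • Z) :=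
        isConvex_worstCase _ _ t ht
    _ ≤ t * (segmentRisk Z X + ε) + (1 - t) * (segmentRisk Z Y + ε) := by
        gcongr
        · exact ht.1
        · exact sub_nonneg.mpr ht.2
    _ = t * segmentRisk Z X + (1 - t) * segmentRisk Z Y + ε := by ring

lemma isRiskMeasure_segmentRisk {ρ : (Ω →ᵇ ℝ) → ℝ} (hρ : IsRiskMeasure ρ)
    (hZ : ∀ l : unitInterval, ρ ((l : ℝ) • Z) ≤ 0) : IsRiskMeasure (segmentRisk Z) := by
  refine ⟨fun X Y hYX => segmentRisk_mono hYX, segmentRisk_sub_const, le_antisymm ?_ ?_⟩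
  · simpa [worstCase_zero] using segmentRisk_le (Z := Z) 0 0
  · simpa [hρ.2.2] using le_segmentRisk_of_smul_nonpos hρ hZ 0

end SegmentRisk

theorem IsStarShaped.exists_isConvex_ge_eq {Ω : Type*} [TopologicalSpace Ω] [Nonempty Ω]
    {ρ : (Ω →ᵇ ℝ) → ℝ} (hss : IsStarShaped ρ) (hρ : IsRiskMeasure ρ) (X₀ : Ω →ᵇ ℝ) :
    ∃ g, (IsRiskMeasure g ∧ IsConvex g) ∧ (∀ X, ρ X ≤ g X) ∧ g X₀ = ρ X₀ := by
  set Z := X₀ - const Ω (ρ X₀) with hZ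
  have hZ_acc : ∀ l : unitInterval, ρ ((l : ℝ) • Z) ≤ 0 :=
    fun l => hss.smul_nonpos hρ.2.2 (by rw [hZ, hρ.2.1, sub_self]) l.2
  have hge := le_segmentRisk_of_smul_nonpos hρ hZ_acc
  refine ⟨segmentRisk Z, ⟨isRiskMeasure_segmentRisk hρ hZ_acc, isConvex_segmentRisk⟩, hge,
    le_antisymm ?_ (hge X₀)⟩
  have hZZ : segmentRisk Z (X₀ - const Ω (ρ X₀)) ≤ 0 := by
    simpa [← hZ, worstCase_zero] using segmentRisk_le (Z := Z) Z 1
  rw [segmentRisk_sub_const] at hZZ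
  linarith

section Relaxation

variable {Ω : Type*} [TopologicalSpace Ω]

lemma mem_relaxation_iff {Γ : Set ((Ω →ᵇ ℝ) → ℝ)} {ρ : (Ω →ᵇ ℝ) → ℝ}
    (hrep : ∀ X, IsLeast {y : ℝ | ∃ γ ∈ Γ, y = γ X} (ρ X)) {g : (Ω →ᵇ ℝ) → ℝ} :
    g ∈ relaxation Γ ↔ (IsRiskMeasure g ∧ IsConvex g) ∧ ∀ X, ρ X ≤ g X := by
  refine and_congr_right fun _ => forall_congr' fun X => ⟨?_, fun h => ?_⟩
  · rintro ⟨γ, hγ, hle⟩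
    exact ((hrep X).2 ⟨γ, hγ, rfl⟩).trans hle
  · obtain ⟨γ, hγ, heq⟩ := (hrep X).1
    exact ⟨γ, hγ, heq ▸ h⟩

lemma iInter_relaxation_eq {ι : Type*} [Nonempty ι] {ρ : ι → (Ω →ᵇ ℝ) → ℝ}
    (hρ : ∀ i, IsRiskMeasure (ρ i)) {Γ : ι → Set ((Ω →ᵇ ℝ) → ℝ)}
    (hrep : ∀ i, ∀ X, IsLeast {y : ℝ | ∃ γ ∈ Γ i, y = γ X} (ρ i X)) :
    ⋂ i, relaxation (Γ i) =
      {γ | (IsRiskMeasure γ ∧ IsConvex γ) ∧ ∀ X, (⨆ i, ρ i X) ≤ γ X} := by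
  ext g
  simp only [Set.mem_iInter, mem_relaxation_iff (hrep _), Set.mem_ofPred_eq, forall_and,
    forall_const, ciSup_le_iff (bddAbove_range_of_isRiskMeasure hρ _)]
  exact and_congr_right' forall_comm

end Relaxation

theorem supremum_representation_via_relaxations_general
    {Ω : Type*} [TopologicalSpace Ω] [Nonempty Ω]
    {ι : Type*} [Nonempty ι]
    (ρ : ι → (Ω →ᵇ ℝ) → ℝ)
    (hrm : ∀ i, IsRiskMeasure (ρ i)) (hss : ∀ i, IsStarShaped (ρ i))
    (Γ : ι → Set ((Ω →ᵇ ℝ) → ℝ))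
    (hrep : ∀ i, ∀ X : Ω →ᵇ ℝ, IsLeast {y : ℝ | ∃ γ ∈ Γ i, y = γ X} (ρ i X)) :
    (∀ X : Ω →ᵇ ℝ,
      IsLeast {y : ℝ | ∃ γ ∈ ⋂ i, relaxation (Γ i), y = γ X} (⨆ i, ρ i X)) ∧
    (⋂ i, relaxation (Γ i)) =
      {γ | (IsRiskMeasure γ ∧ IsConvex γ) ∧
        ∀ X : Ω →ᵇ ℝ, (⨆ i, ρ i X) ≤ γ X} := by
  have hset := iInter_relaxation_eq hrm hrep
  refine ⟨fun X => ?_, hset⟩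
  obtain ⟨g, hg, hge, hgX⟩ :=
    (IsStarShaped.iSup hrm hss).exists_isConvex_ge_eq (IsRiskMeasure.iSup hrm) X
  rw [hset]
  exact ⟨⟨g, ⟨hg, hge⟩, hgX.symm⟩, by rintro _ ⟨γ, hγ, rfl⟩; exact hγ.2 X⟩

theorem supremum_representation_via_relaxations
    {Ω : Type*} [TopologicalSpace Ω] [DiscreteTopology Ω] [Nonempty Ω]
    {ι : Type*} [Nonempty ι]
    (ρ : ι → (Ω →ᵇ ℝ) → ℝ)
    (hrm : ∀ i, IsRiskMeasure (ρ i)) (hss : ∀ i, IsStarShaped (ρ i))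
    (Γ : ι → Set ((Ω →ᵇ ℝ) → ℝ))
    (hΓ : ∀ i, ∀ γ ∈ Γ i, IsRiskMeasure γ ∧ IsConvex γ)
    (hrep : ∀ i, ∀ X : Ω →ᵇ ℝ, IsLeast {y : ℝ | ∃ γ ∈ Γ i, y = γ X} (ρ i X)) :
    (∀ X : Ω →ᵇ ℝ,
      IsLeast {y : ℝ | ∃ γ ∈ ⋂ i, relaxation (Γ i), y = γ X} (⨆ i, ρ i X)) ∧
    (⋂ i, relaxation (Γ i)) =
      {γ | (IsRiskMeasure γ ∧ IsConvex γ) ∧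
        ∀ X : Ω →ᵇ ℝ, (⨆ i, ρ i X) ≤ γ X} :=
  supremum_representation_via_relaxations_general ρ hrm hss Γ hrep
end

section
/- Let ρ_1, …, ρ_n be star-shaped risk measures satisfying the normality condition Σ_{i=1}^n ρ_i(Z_i) ≥ 0 whenever Σ_{i=1}^n Z_i = 0, and for each i let Γ_i be a set of convex risk measures with ρ_i(X) = min_{γ∈Γ_i} γ(X) for all X ∈ 𝒳 (minima attained). Then for every family (γ_1,…,γ_n) ∈ Γ_1×⋯×Γ_n the inf-convolution □_i γ_i is a well-defined (real-valued) convex risk measure dominating ρ_⋄ = □_i ρ_i, and for every X ∈ 𝒳, ρ_⋄(X) = inf{ (□_{i=1}^n γ_i)(X) : γ_i ∈ Γ_i for all i }. Moreover, if the infimum defining ρ_⋄(X) is attained by some decomposition Σ Y_i = X, then this infimum over families (γ_i) is also attained. -/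
open BoundedContinuousFunction

/-- The set of values of decompositions of `X` appearing in the inf-convolution. -/
def infConvValues {Ω : Type*} [TopologicalSpace Ω] {n : ℕ}
    (ρ : Fin n → (Ω →ᵇ ℝ) → ℝ) (X : Ω →ᵇ ℝ) : Set ℝ :=
  {s : ℝ | ∃ Y : Fin n → (Ω →ᵇ ℝ), (∑ i, Y i) = X ∧ s = ∑ i, ρ i (Y i)}

/-- The inf-convolution `□_i ρ_i`. -/
noncomputable def infConv {Ω : Type*} [TopologicalSpace Ω] {n : ℕ}
    (ρ : Fin n → (Ω →ᵇ ℝ) → ℝ) (X : Ω →ᵇ ℝ) : ℝ :=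
  sInf (infConvValues ρ X)

/-!
Every decomposition `X = ∑ Yᵢ` is costed by `ρ` no more than by any admissible family `(γᵢ)`,
since `ρᵢ ≤ γᵢ`; conversely, choosing for each `i` a `γᵢ ∈ Γᵢ` that attains `ρᵢ(Yᵢ)` gives a
family whose inf-convolution at `X` is at most `∑ ρᵢ(Yᵢ)`. The normality condition makes all
these inf-convolutions finite, and convexity and the risk-measure axioms pass to
inf-convolutions by shifting a single summand of a decomposition.
-/

open scoped Pointwise

theorem Fintype.sum_update_eq_sub_add {ι M : Type*} [Fintype ι] [DecidableEq ι]
    [AddCommGroup M] (f : ι → M) (j : ι) (b : M) :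
    ∑ i, Function.update f j b i = ∑ i, f i - f j + b := by
  rw [Finset.sum_update_of_mem (Finset.mem_univ j), Finset.sdiff_singleton_eq_erase,
    Finset.sum_erase_eq_sub (Finset.mem_univ j)]
  abel

theorem Fintype.sum_apply_update_eq_sub_add {ι α M : Type*} [Fintype ι] [DecidableEq ι]
    [AddCommGroup M] (τ : ι → α → M) (Y : ι → α) (j : ι) (b : α) :
    ∑ i, τ i (Function.update Y j b i) = ∑ i, τ i (Y i) - τ j (Y j) + τ j b := by
  simp only [Function.apply_update τ]
  exact Fintype.sum_update_eq_sub_add _ j _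

theorem Real.le_mul_sInf_add {S : Set ℝ} (hS : S.Nonempty) {a c d : ℝ} (hc : 0 ≤ c)
    (h : ∀ s ∈ S, a ≤ c * s + d) : a ≤ c * sInf S + d := by
  have : a - d ≤ sInf (c • S) := by
    refine le_csInf hS.smul_set ?_
    rintro _ ⟨s, hs, rfl⟩
    linarith [h s hs, smul_eq_mul c s]
  rw [Real.sInf_smul_of_nonneg hc, smul_eq_mul] at this
  linarith

section InfConv

variable {Ω : Type*} [TopologicalSpace Ω] {n : ℕ}

theorem IsRiskMeasure.apply_sub_le_add_norm {ρ : (Ω →ᵇ ℝ) → ℝ} (hρ : IsRiskMeasure ρ)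
    (X Z : Ω →ᵇ ℝ) : ρ (X - Z) ≤ ρ X + ‖Z‖ := by
  have hle : X - Z ≤ X - const Ω (-‖Z‖) := fun ω =>
    show X ω - Z ω ≤ X ω - -‖Z‖ by linarith [(abs_le.mp (Z.norm_coe_le_norm ω)).1]
  linarith [hρ.1 _ _ hle, hρ.2.1 X (-‖Z‖)]

def IsNormalFamily (τ : Fin n → (Ω →ᵇ ℝ) → ℝ) : Prop :=
  ∀ Z : Fin n → (Ω →ᵇ ℝ), (∑ i, Z i) = 0 → 0 ≤ ∑ i, τ i (Z i)

theorem IsNormalFamily.mono {σ τ : Fin n → (Ω →ᵇ ℝ) → ℝ} (hσ : IsNormalFamily σ)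
    (hle : ∀ i X, σ i X ≤ τ i X) : IsNormalFamily τ := fun Z hZ =>
  (hσ Z hZ).trans (Finset.sum_le_sum fun i _ => hle i (Z i))

theorem infConvValues_nonempty (hn : 0 < n) (τ : Fin n → (Ω →ᵇ ℝ) → ℝ) (X : Ω →ᵇ ℝ) :
    (infConvValues τ X).Nonempty :=
  ⟨_, Pi.single ⟨0, hn⟩ X, by simp [Finset.sum_pi_single'], rfl⟩

variable {τ : Fin n → (Ω →ᵇ ℝ) → ℝ}

theorem infConv_le_sum {X : Ω →ᵇ ℝ} (hbdd : BddBelow (infConvValues τ X))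
    {Y : Fin n → (Ω →ᵇ ℝ)} (hY : ∑ i, Y i = X) : infConv τ X ≤ ∑ i, τ i (Y i) :=
  csInf_le hbdd ⟨Y, hY, rfl⟩

theorem le_infConv {X : Ω →ᵇ ℝ} {a : ℝ} (hne : (infConvValues τ X).Nonempty)
    (h : ∀ Y : Fin n → (Ω →ᵇ ℝ), ∑ i, Y i = X → a ≤ ∑ i, τ i (Y i)) : a ≤ infConv τ X :=
  le_csInf hne fun _ ⟨Y, hY, hs⟩ => hs ▸ h Y hY

theorem infConv_le_infConv {σ : Fin n → (Ω →ᵇ ℝ) → ℝ} (hle : ∀ i X, σ i X ≤ τ i X)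
    {X : Ω →ᵇ ℝ} (hbdd : BddBelow (infConvValues σ X)) (hne : (infConvValues τ X).Nonempty) :
    infConv σ X ≤ infConv τ X :=
  le_infConv hne fun Y hY =>
    (infConv_le_sum hbdd hY).trans (Finset.sum_le_sum fun i _ => hle i (Y i))

theorem neg_norm_le_of_mem_infConvValues (hn : 0 < n) (hτ : ∀ i, IsRiskMeasure (τ i))
    (hnormal : IsNormalFamily τ) {X : Ω →ᵇ ℝ} {s : ℝ} (hs : s ∈ infConvValues τ X) :
    -‖X‖ ≤ s := by
  classical
  obtain ⟨Y, hY, rfl⟩ := hs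
  let j : Fin n := ⟨0, hn⟩
  have hZ : ∑ i, Function.update Y j (Y j - X) i = 0 := by
    rw [Fintype.sum_update_eq_sub_add, hY]
    abel
  have := hnormal _ hZ
  rw [Fintype.sum_apply_update_eq_sub_add] at this
  linarith [(hτ j).apply_sub_le_add_norm (Y j) X]

theorem bddBelow_infConvValues (hn : 0 < n) (hτ : ∀ i, IsRiskMeasure (τ i))
    (hnormal : IsNormalFamily τ) (X : Ω →ᵇ ℝ) : BddBelow (infConvValues τ X) :=
  ⟨-‖X‖, fun _ hs => neg_norm_le_of_mem_infConvValues hn hτ hnormal hs⟩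

theorem infConv_sub_le_add {X Z : Ω →ᵇ ℝ} {c : ℝ} (j : Fin n)
    (hbdd : BddBelow (infConvValues τ (X - Z))) (hne : (infConvValues τ X).Nonempty)
    (hc : ∀ W, τ j (W - Z) ≤ τ j W + c) : infConv τ (X - Z) ≤ infConv τ X + c := by
  classical
  rw [← sub_le_iff_le_add]
  refine le_infConv hne fun A hA => ?_
  have hsum : ∑ i, Function.update A j (A j - Z) i = X - Z := by
    rw [Fintype.sum_update_eq_sub_add, hA]
    abel
  have := infConv_le_sum hbdd hsum
  rw [Fintype.sum_apply_update_eq_sub_add] at this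
  linarith [hc (A j)]

theorem isRiskMeasure_infConv (hn : 0 < n) (hτ : ∀ i, IsRiskMeasure (τ i))
    (hnormal : IsNormalFamily τ) : IsRiskMeasure (infConv τ) := by
  have hne := infConvValues_nonempty hn τ
  have hbdd := bddBelow_infConvValues hn hτ hnormal
  let j : Fin n := ⟨0, hn⟩
  have htrans_le : ∀ X m, infConv τ (X - const Ω m) ≤ infConv τ X + -m := fun X m =>
    infConv_sub_le_add j (hbdd _) (hne X) fun W => ((hτ j).2.1 W m).le
  refine ⟨fun X Y hYX => ?_, fun X m => ?_, ?_⟩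
  · have hc : ∀ W, τ j (W - (X - Y)) ≤ τ j W + 0 := fun W => by
      simpa using (hτ j).1 _ _ (sub_le_self W (sub_nonneg.2 hYX))
    simpa using infConv_sub_le_add j (hbdd _) (hne X) hc
  · have h := htrans_le (X - const Ω m) (-m)
    rw [show X - const Ω m - const Ω (-m) = X by ext; simp] at h
    linarith [htrans_le X m]
  · refine le_antisymm ?_ (le_infConv (hne 0) hnormal)
    simpa [fun i => (hτ i).2.2] using infConv_le_sum (hbdd 0) (Y := 0) (by simp)

theorem isConvex_infConv (hn : 0 < n) (hτ : ∀ i, IsConvex (τ i))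
    (hbdd : ∀ X, BddBelow (infConvValues τ X)) : IsConvex (infConv τ) := by
  rintro X Y t ⟨ht0, ht1⟩
  have key : ∀ s ∈ infConvValues τ X, ∀ s' ∈ infConvValues τ Y,
      infConv τ (t • X + (1 - t) • Y) ≤ t * s + (1 - t) * s' := by
    rintro _ ⟨A, hA, rfl⟩ _ ⟨B, hB, rfl⟩
    have hC : ∑ i, (t • A i + (1 - t) • B i) = t • X + (1 - t) • Y := by
      rw [Finset.sum_add_distrib, ← Finset.smul_sum, ← Finset.smul_sum, hA, hB]
    calc infConv τ (t • X + (1 - t) • Y) ≤ ∑ i, τ i (t • A i + (1 - t) • B i) :=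
          infConv_le_sum (hbdd _) hC
      _ ≤ ∑ i, (t * τ i (A i) + (1 - t) * τ i (B i)) :=
          Finset.sum_le_sum fun i _ => hτ i (A i) (B i) t ⟨ht0, ht1⟩
      _ = t * ∑ i, τ i (A i) + (1 - t) * ∑ i, τ i (B i) := by
          rw [Finset.sum_add_distrib, Finset.mul_sum, Finset.mul_sum]
  rw [add_comm (t * _)]
  refine Real.le_mul_sInf_add (infConvValues_nonempty hn τ Y) (by linarith) fun s' hs' => ?_
  rw [add_comm ((1 - t) * s')]
  exact Real.le_mul_sInf_add (infConvValues_nonempty hn τ X) ht0 fun s hs => key s hs s' hs'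

theorem exists_mem_pi_infConv_le_sum {ρ : Fin n → (Ω →ᵇ ℝ) → ℝ}
    {Γ : Fin n → Set ((Ω →ᵇ ℝ) → ℝ)} (hatt : ∀ i X, ∃ γ ∈ Γ i, ρ i X = γ X) {X : Ω →ᵇ ℝ}
    (hbdd : ∀ γ : Fin n → (Ω →ᵇ ℝ) → ℝ, (∀ i, γ i ∈ Γ i) → BddBelow (infConvValues γ X))
    {Y : Fin n → (Ω →ᵇ ℝ)} (hY : ∑ i, Y i = X) :
    ∃ γ : Fin n → (Ω →ᵇ ℝ) → ℝ, (∀ i, γ i ∈ Γ i) ∧ infConv γ X ≤ ∑ i, ρ i (Y i) := by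
  choose γ hγ hγY using fun i => hatt i (Y i)
  refine ⟨γ, hγ, (infConv_le_sum (hbdd γ hγ) hY).trans_eq ?_⟩
  exact Finset.sum_congr rfl fun i _ => (hγY i).symm

theorem infConv_eq_sInf_infConv (hn : 0 < n) {ρ : Fin n → (Ω →ᵇ ℝ) → ℝ}
    {Γ : Fin n → Set ((Ω →ᵇ ℝ) → ℝ)} {X : Ω →ᵇ ℝ}
    (hdom : ∀ γ : Fin n → (Ω →ᵇ ℝ) → ℝ, (∀ i, γ i ∈ Γ i) → infConv ρ X ≤ infConv γ X)
    (hsel : ∀ Y : Fin n → (Ω →ᵇ ℝ), ∑ i, Y i = X →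
      ∃ γ : Fin n → (Ω →ᵇ ℝ) → ℝ, (∀ i, γ i ∈ Γ i) ∧ infConv γ X ≤ ∑ i, ρ i (Y i)) :
    infConv ρ X = sInf {y | ∃ γ : Fin n → (Ω →ᵇ ℝ) → ℝ, (∀ i, γ i ∈ Γ i) ∧ y = infConv γ X} := by
  obtain ⟨_, Y, hY, -⟩ := infConvValues_nonempty hn ρ X
  obtain ⟨γ, hγ, -⟩ := hsel Y hY
  have hbdd : BddBelow {y | ∃ γ : Fin n → (Ω →ᵇ ℝ) → ℝ, (∀ i, γ i ∈ Γ i) ∧ y = infConv γ X} :=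
    ⟨infConv ρ X, by rintro _ ⟨γ, hγ, rfl⟩; exact hdom γ hγ⟩
  refine le_antisymm (le_csInf ⟨_, γ, hγ, rfl⟩ ?_) (le_infConv (infConvValues_nonempty hn ρ X) ?_)
  · rintro _ ⟨γ, hγ, rfl⟩
    exact hdom γ hγ
  · intro Y hY
    obtain ⟨γ, hγ, hγY⟩ := hsel Y hY
    exact (csInf_le hbdd ⟨γ, hγ, rfl⟩).trans hγY

end InfConv

theorem infConvolution_representation_general
    {Ω : Type*} [TopologicalSpace Ω]
    {n : ℕ} (hn : 0 < n) (ρ : Fin n → (Ω →ᵇ ℝ) → ℝ)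
    (hrm : ∀ i, IsRiskMeasure (ρ i))
    (hnorm : ∀ Z : Fin n → (Ω →ᵇ ℝ), (∑ i, Z i) = 0 → 0 ≤ ∑ i, ρ i (Z i))
    (Γ : Fin n → Set ((Ω →ᵇ ℝ) → ℝ))
    (hΓ : ∀ i, ∀ γ ∈ Γ i, IsRiskMeasure γ ∧ IsConvex γ)
    (hrep : ∀ i, ∀ X : Ω →ᵇ ℝ, IsLeast {y : ℝ | ∃ γ ∈ Γ i, y = γ X} (ρ i X)) :
    -- each `□_i γ_i` is a well-defined convex risk measure dominating `ρ_⋄`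
    (∀ γ : Fin n → (Ω →ᵇ ℝ) → ℝ, (∀ i, γ i ∈ Γ i) →
      (∀ X : Ω →ᵇ ℝ, (infConvValues γ X).Nonempty ∧ BddBelow (infConvValues γ X)) ∧
      IsRiskMeasure (infConv γ) ∧ IsConvex (infConv γ) ∧
      ∀ X : Ω →ᵇ ℝ, infConv ρ X ≤ infConv γ X) ∧
    -- `ρ_⋄(X) = inf { (□_i γ_i)(X) : γ_i ∈ Γ_i }`
    (∀ X : Ω →ᵇ ℝ,
      infConv ρ X =
        sInf {y : ℝ | ∃ γ : Fin n → (Ω →ᵇ ℝ) → ℝ,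
          (∀ i, γ i ∈ Γ i) ∧ y = infConv γ X}) ∧
    -- attainment: if the infimum defining `ρ_⋄(X)` is attained, so is the one over `(γ_i)`
    (∀ X : Ω →ᵇ ℝ,
      (∃ Y : Fin n → (Ω →ᵇ ℝ), (∑ i, Y i) = X ∧ infConv ρ X = ∑ i, ρ i (Y i)) →
      ∃ γ : Fin n → (Ω →ᵇ ℝ) → ℝ, (∀ i, γ i ∈ Γ i) ∧ infConv γ X = infConv ρ X) := by
  have hbddρ := bddBelow_infConvValues hn hrm hnorm
  have hadm : ∀ γ : Fin n → (Ω →ᵇ ℝ) → ℝ, (∀ i, γ i ∈ Γ i) →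
      (∀ X, (infConvValues γ X).Nonempty ∧ BddBelow (infConvValues γ X)) ∧
      IsRiskMeasure (infConv γ) ∧ IsConvex (infConv γ) ∧ ∀ X, infConv ρ X ≤ infConv γ X := by
    intro γ hγ
    have hle : ∀ i X, ρ i X ≤ γ i X := fun i X => (hrep i X).2 ⟨γ i, hγ i, rfl⟩
    have hrmγ : ∀ i, IsRiskMeasure (γ i) := fun i => (hΓ i _ (hγ i)).1
    have hnormγ := IsNormalFamily.mono hnorm hle
    have hbdd := bddBelow_infConvValues hn hrmγ hnormγ
    exact ⟨fun X => ⟨infConvValues_nonempty hn γ X, hbdd X⟩, isRiskMeasure_infConv hn hrmγ hnormγ,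
      isConvex_infConv hn (fun i => (hΓ i _ (hγ i)).2) hbdd,
      fun X => infConv_le_infConv hle (hbddρ X) (infConvValues_nonempty hn γ X)⟩
  have hsel : ∀ X (Y : Fin n → (Ω →ᵇ ℝ)), ∑ i, Y i = X →
      ∃ γ : Fin n → (Ω →ᵇ ℝ) → ℝ, (∀ i, γ i ∈ Γ i) ∧ infConv γ X ≤ ∑ i, ρ i (Y i) :=
    fun X _ hY => exists_mem_pi_infConv_le_sum (fun i X => (hrep i X).1)
      (fun γ hγ => ((hadm γ hγ).1 X).2) hY
  refine ⟨hadm, fun X => infConv_eq_sInf_infConv hn (fun γ hγ => (hadm γ hγ).2.2.2 X) (hsel X),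
    fun X ⟨Y, hY, hval⟩ => ?_⟩
  obtain ⟨γ, hγ, hγY⟩ := hsel X Y hY
  exact ⟨γ, hγ, le_antisymm (hγY.trans hval.ge) ((hadm γ hγ).2.2.2 X)⟩

theorem infConvolution_representation
    {Ω : Type*} [TopologicalSpace Ω] [DiscreteTopology Ω] [Nonempty Ω]
    {n : ℕ} (hn : 0 < n) (ρ : Fin n → (Ω →ᵇ ℝ) → ℝ)
    (hrm : ∀ i, IsRiskMeasure (ρ i)) (hss : ∀ i, IsStarShaped (ρ i))
    (hnorm : ∀ Z : Fin n → (Ω →ᵇ ℝ), (∑ i, Z i) = 0 → 0 ≤ ∑ i, ρ i (Z i))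
    (Γ : Fin n → Set ((Ω →ᵇ ℝ) → ℝ))
    (hΓ : ∀ i, ∀ γ ∈ Γ i, IsRiskMeasure γ ∧ IsConvex γ)
    (hrep : ∀ i, ∀ X : Ω →ᵇ ℝ, IsLeast {y : ℝ | ∃ γ ∈ Γ i, y = γ X} (ρ i X)) :
    -- each `□_i γ_i` is a well-defined convex risk measure dominating `ρ_⋄`
    (∀ γ : Fin n → (Ω →ᵇ ℝ) → ℝ, (∀ i, γ i ∈ Γ i) →
      (∀ X : Ω →ᵇ ℝ, (infConvValues γ X).Nonempty ∧ BddBelow (infConvValues γ X)) ∧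
      IsRiskMeasure (infConv γ) ∧ IsConvex (infConv γ) ∧
      ∀ X : Ω →ᵇ ℝ, infConv ρ X ≤ infConv γ X) ∧
    -- `ρ_⋄(X) = inf { (□_i γ_i)(X) : γ_i ∈ Γ_i }`
    (∀ X : Ω →ᵇ ℝ,
      infConv ρ X =
        sInf {y : ℝ | ∃ γ : Fin n → (Ω →ᵇ ℝ) → ℝ,
          (∀ i, γ i ∈ Γ i) ∧ y = infConv γ X}) ∧
    -- attainment: if the infimum defining `ρ_⋄(X)` is attained, so is the one over `(γ_i)`
    (∀ X : Ω →ᵇ ℝ,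
      (∃ Y : Fin n → (Ω →ᵇ ℝ), (∑ i, Y i) = X ∧ infConv ρ X = ∑ i, ρ i (Y i)) →
      ∃ γ : Fin n → (Ω →ᵇ ℝ) → ℝ, (∀ i, γ i ∈ Γ i) ∧ infConv γ X = infConv ρ X) :=
  infConvolution_representation_general hn ρ hrm hnorm Γ hΓ hrep
end
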